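/- arXiv:2505.03047 — 4 statements merged into one kernel-verified Lean document; each statement's English description precedes it below -/
import Mathlib

section
/- Let Q ⊂ ℝ³ be a (solid) regular tetrahedron of side length ℓ and let Π be any affine plane in ℝ³ that does not contain any face of Q. Then the 1-dimensional Hausdorff measure (length) of Π ∩ ∂Q is at most 3ℓ, i.e. the perimeter of the planar cross-section Π ∩ Q is at most 3ℓ. -/
/-!
Let `t i` be the value at `p i` of the affine function cutting out the plane, and sort the
vertices so that `t` is monotone. A point of `∂Q ∩ Π` has a vanishing barycentric coordinate, so
it lies in the section of a face. Such a section lies on a line inside a triangle of diameter `ℓ`,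
and it is at most a point when `t` has one strict sign on the face's vertices up to at most one
zero. Hence either some face contributes nothing, or the plane contains an edge (shared by two
faces, counted once), or `Π` separates `{p 0, p 1}` from `{p 2, p 3}`. In the last case the plane
cuts the two edges from the apex `X` of a face at fractions `r ≤ s`, and as the angle at `X` is
`60°` that side of the section has length at most `ℓ s`; the two fractions measured along the
edge `p 1 p 2` add up to `1`, and the other two are at most `1`.
-/

open MeasureTheory Set Metric
open scoped RealInnerProductSpace

section RegularSimplex

variable {E : Type*} [NormedAddCommGroup E] [InnerProductSpace ℝ E]
  {ι : Type*} [Fintype ι] {p : ι → E} {ℓ : ℝ}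

theorem norm_sum_smul_sq_of_pairwise_dist_eq (hp : Pairwise fun i j => dist (p i) (p j) = ℓ)
    {w : ι → ℝ} (hw : ∑ i, w i = 0) :
    ‖∑ i, w i • p i‖ ^ 2 = ℓ ^ 2 / 2 * ∑ i, w i ^ 2 := by
  classical
  have hd : ∀ i j, ‖p i - p j‖ * ‖p i - p j‖ = ℓ ^ 2 - if i = j then ℓ ^ 2 else 0 := by
    intro i j
    rcases eq_or_ne i j with rfl | h
    · simp
    · rw [← dist_eq_norm, hp h, if_neg h]; ring
  rw [← real_inner_self_eq_norm_sq, inner_sum_smul_sum_smul_of_sum_eq_zero _ hw _ hw]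
  simp_rw [hd, mul_sub, Finset.sum_sub_distrib, ← Finset.sum_mul, ← Finset.mul_sum, hw,
    mul_ite, mul_zero, Finset.sum_ite_eq, Finset.mem_univ, if_true]
  rw [Finset.sum_const_zero, zero_mul, zero_sub, neg_neg, ← Finset.sum_mul]
  simp_rw [← pow_two]
  ring

theorem affineIndependent_of_pairwise_dist_eq (hℓ : ℓ ≠ 0)
    (hp : Pairwise fun i j => dist (p i) (p j) = ℓ) : AffineIndependent ℝ p := by
  rw [affineIndependent_iff_of_fintype]
  intro w hw hp0
  rw [Finset.weightedVSub_eq_linear_combination _ hw] at hp0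
  have h := norm_sum_smul_sq_of_pairwise_dist_eq hp hw
  rw [hp0, norm_zero, zero_pow two_ne_zero, eq_comm, mul_eq_zero] at h
  have hsq : ∑ i, w i ^ 2 = 0 := h.resolve_left (by positivity)
  intro i
  exact pow_eq_zero_iff two_ne_zero |>.mp
    ((Finset.sum_eq_zero_iff_of_nonneg fun j _ => sq_nonneg (w j)).mp hsq i (Finset.mem_univ i))

end RegularSimplex

theorem ediam_range_le_of_pairwise_dist_eq {ι X : Type*} [PseudoMetricSpace X] {p : ι → X} {ℓ : ℝ}
    (hp : Pairwise fun i j => dist (p i) (p j) = ℓ) : ediam (range p) ≤ ENNReal.ofReal ℓ := by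
  refine ediam_le_iff.2 ?_
  rintro _ ⟨i, rfl⟩ _ ⟨j, rfl⟩
  rcases eq_or_ne i j with rfl | hij
  · simp
  · rw [edist_dist, hp hij]

theorem hausdorffMeasure_one_le_ediam_of_subset_line {F : Type*} [NormedAddCommGroup F]
    [NormedSpace ℝ F] [MeasurableSpace F] [BorelSpace F] {T : Set F} {x v : F}
    (hT : T ⊆ range fun s : ℝ => x + s • v) : μH[1] T ≤ ediam T := by
  rcases eq_or_ne v 0 with rfl | hv
  · have := Measure.nullSingletonClass_hausdorff F one_pos
    have hsub : T.Subsingleton := (subsingleton_singleton (a := x)).anti fun q hq => by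
      obtain ⟨s, rfl⟩ := hT hq
      simp
    simp [hsub.measure_zero]
  set u := ‖v‖⁻¹ • v
  have hu : ‖u‖ = 1 := by simp [u, norm_smul, hv]
  set f : ℝ → F := fun s => x + s • u
  have hf : Isometry f := Isometry.of_dist_eq fun a b => by
    rw [dist_eq_norm, Real.dist_eq, add_sub_add_left_eq_sub, ← sub_smul, norm_smul,
      hu, mul_one, Real.norm_eq_abs]
  have hTf : T = f '' (f ⁻¹' T) := by
    refine (image_preimage_eq_of_subset fun q hq => ?_).symm
    obtain ⟨s, rfl⟩ := hT hq
    refine ⟨s * ‖v‖, ?_⟩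
    simp only [f, u, smul_smul, mul_assoc, mul_inv_cancel₀ (norm_ne_zero_iff.2 hv), mul_one]
  rw [hTf, hf.hausdorffMeasure_image (Or.inl zero_le_one), hf.ediam_image, hausdorffMeasure_real]
  exact Real.volume_le_diam _

theorem measure_le_ofReal_of_subset_union₄ {α : Type*} [MeasurableSpace α] {μ : Measure α}
    {s s₀ s₁ s₂ s₃ : Set α} {b₀ b₁ b₂ b₃ : ℝ} (hs : s ⊆ s₀ ∪ s₁ ∪ s₂ ∪ s₃)
    (h₀ : μ s₀ ≤ ENNReal.ofReal b₀) (h₁ : μ s₁ ≤ ENNReal.ofReal b₁)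
    (h₂ : μ s₂ ≤ ENNReal.ofReal b₂) (h₃ : μ s₃ ≤ ENNReal.ofReal b₃)
    (hb₀ : 0 ≤ b₀) (hb₁ : 0 ≤ b₁) (hb₂ : 0 ≤ b₂) (hb₃ : 0 ≤ b₃) :
    μ s ≤ ENNReal.ofReal (b₀ + b₁ + b₂ + b₃) := by
  rw [ENNReal.ofReal_add (by positivity) hb₃, ENNReal.ofReal_add (by positivity) hb₂,
    ENNReal.ofReal_add hb₀ hb₁]
  calc μ s ≤ μ (s₀ ∪ s₁ ∪ s₂ ∪ s₃) := measure_mono hs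
    _ ≤ μ s₀ + μ s₁ + μ s₂ + μ s₃ :=
        (measure_union_le _ _).trans <| by
          gcongr
          exact (measure_union_le _ _).trans (by gcongr; exact measure_union_le _ _)
    _ ≤ _ := by gcongr

theorem AffineBasis.frontier_convexHull {ι F : Type*} [Finite ι] [NormedAddCommGroup F]
    [NormedSpace ℝ F] (b : AffineBasis ι ℝ F) :
    frontier (convexHull ℝ (range b)) = {x | (∀ i, 0 ≤ b.coord i x) ∧ ∃ i, b.coord i x = 0} := by
  have hclosed : IsClosed (convexHull ℝ (range b)) :=
    ((finite_range b).isCompact_convexHull ℝ).isClosed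
  rw [frontier, hclosed.closure_eq, b.interior_convexHull, b.convexHull_eq_nonneg_coord]
  ext x
  simp only [mem_sdiff, mem_ofPred_eq, not_forall, not_lt]
  exact and_congr_right fun h => exists_congr fun i => ⟨fun hi => le_antisymm hi (h i), le_of_eq⟩

section TriangleSection

variable {E : Type*} [AddCommGroup E] [Module ℝ E] {A B C x : E} {u v w : ℝ}

/-- The zero set, inside the triangle `ABC`, of the affine function taking the values `u, v, w`
at `A, B, C`. -/
def triangleSection (A B C : E) (u v w : ℝ) : Set E :=
  {x | ∃ a b c : ℝ, 0 ≤ a ∧ 0 ≤ b ∧ 0 ≤ c ∧ a + b + c = 1 ∧ a * u + b * v + c * w = 0 ∧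
    a • A + b • B + c • C = x}

theorem triangleSection_reverse :
    triangleSection A B C u v w = triangleSection C B A w v u := by
  ext x
  constructor <;>
  · rintro ⟨a, b, c, ha, hb, hc, hs, ht, rfl⟩
    exact ⟨c, b, a, hc, hb, ha, by linarith, by linarith, by module⟩

theorem triangleSection_neg :
    triangleSection A B C (-u) (-v) (-w) = triangleSection A B C u v w := by
  ext x
  constructor <;>
  · rintro ⟨a, b, c, ha, hb, hc, hs, ht, rfl⟩
    exact ⟨a, b, c, ha, hb, hc, hs, by linarith, rfl⟩

theorem triangleSection_subset_convexHull :
    triangleSection A B C u v w ⊆ convexHull ℝ {A, B, C} := by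
  rintro x ⟨a, b, c, ha, hb, hc, hs, -, rfl⟩
  have := (convex_convexHull ℝ ({A, B, C} : Set E)).sum_mem (t := Finset.univ) (w := ![a, b, c])
    (z := ![A, B, C]) (by simp [Fin.forall_fin_succ, ha, hb, hc]) (by simp [Fin.sum_univ_three, hs])
    fun i _ => subset_convexHull ℝ _ (by fin_cases i <;> simp)
  simpa [Fin.sum_univ_three] using this

theorem triangleSection_subset_line (huv : u ≠ v) (hx : x ∈ triangleSection A B C u v w) :
    triangleSection A B C u v w ⊆
      range fun s : ℝ => x + s • ((v - w) • A + (w - u) • B + (u - v) • C) := by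
  obtain ⟨a₀, b₀, c₀, -, -, -, hs₀, ht₀, rfl⟩ := hx
  rintro y ⟨a, b, c, -, -, -, hs, ht, rfl⟩
  have huv' : u - v ≠ 0 := sub_ne_zero.2 huv
  refine ⟨(c - c₀) / (u - v), ?_⟩
  have ha : a₀ + (c - c₀) / (u - v) * (v - w) = a := by
    field_simp; linear_combination ht₀ - ht + v * hs - v * hs₀
  have hb : b₀ + (c - c₀) / (u - v) * (w - u) = b := by
    field_simp; linear_combination ht - ht₀ - u * hs + u * hs₀
  have hc : c₀ + (c - c₀) / (u - v) * (u - v) = c := by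
    field_simp; ring
  linear_combination (norm := module) ha • A + hb • B + hc • C

theorem triangleSection_subset_singleton (huv : 0 < u * v) (huw : 0 ≤ u * w) :
    triangleSection A B C u v w ⊆ {C} := by
  rintro x ⟨a, b, c, ha, hb, hc, hs, ht, rfl⟩
  have hu : u ≠ 0 := left_ne_zero_of_mul huv.ne'
  have hsum : a * u ^ 2 + b * (u * v) + c * (u * w) = 0 := by linear_combination u * ht
  have := mul_nonneg ha (sq_nonneg u)
  have := mul_nonneg hb huv.le
  have := mul_nonneg hc huw
  have hau : a * u ^ 2 = 0 := by linarith
  have hbuv : b * (u * v) = 0 := by linarith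
  obtain rfl : a = 0 := (mul_eq_zero.1 hau).resolve_right (pow_ne_zero 2 hu)
  obtain rfl : b = 0 := (mul_eq_zero.1 hbuv).resolve_right huv.ne'
  obtain rfl : c = 1 := by linarith
  simp

theorem triangleSection_subset_segment (hu : u < 0) (hv : 0 < v) (hw : 0 < w) :
    triangleSection A B C u v w ⊆
      segment ℝ (AffineMap.lineMap A B (u / (u - v))) (AffineMap.lineMap A C (u / (u - w))) := by
  rintro x ⟨a, b, c, ha, hb, hc, hs, ht, rfl⟩
  have huv : u - v < 0 := by linarith
  have huw : u - w < 0 := by linarith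
  have hu₀ : u ≠ 0 := hu.ne
  have huv₀ : u - v ≠ 0 := huv.ne
  have huw₀ : u - w ≠ 0 := huw.ne
  refine ⟨b * (u - v) / u, c * (u - w) / u, ?_, ?_, ?_, ?_⟩
  · exact div_nonneg_of_nonpos (mul_nonpos_of_nonneg_of_nonpos hb huv.le) hu.le
  · exact div_nonneg_of_nonpos (mul_nonpos_of_nonneg_of_nonpos hc huw.le) hu.le
  · field_simp; linear_combination u * hs - ht
  · have hA : b * (u - v) / u * (1 - u / (u - v)) + c * (u - w) / u * (1 - u / (u - w)) = a := by
      field_simp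
      linear_combination -ht
    have hB : b * (u - v) / u * (u / (u - v)) = b := by field_simp
    have hC : c * (u - w) / u * (u / (u - w)) = c := by field_simp
    simp only [AffineMap.lineMap_apply_module]
    linear_combination (norm := module) hA • A + hB • B + hC • C

theorem triangleSection_zero_zero_subset {D : E} (hu : u ≠ 0) :
    triangleSection A B C u 0 0 ⊆ triangleSection B C D 0 0 w := by
  rintro x ⟨a, b, c, ha, hb, hc, hs, ht, rfl⟩
  obtain rfl : a = 0 := by simpa [hu] using ht
  exact ⟨b, c, 0, hb, hc, le_rfl, by linarith, by ring, by module⟩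

end TriangleSection

section EquilateralTriangle

variable {E : Type*} [NormedAddCommGroup E] [InnerProductSpace ℝ E] {A B C : E} {u v w ℓ : ℝ}

theorem dist_lineMap_lineMap_sq (hAB : dist A B = ℓ) (hAC : dist A C = ℓ) (hBC : dist B C = ℓ)
    (s r : ℝ) :
    dist (AffineMap.lineMap A B s) (AffineMap.lineMap A C r) ^ 2 =
      ℓ ^ 2 * (s ^ 2 - s * r + r ^ 2) := by
  have hinner : ⟪B - A, C - A⟫ = ℓ ^ 2 / 2 := by
    have h := norm_sub_sq_real (B - A) (C - A)
    rw [sub_sub_sub_cancel_right, ← dist_eq_norm, ← dist_eq_norm, ← dist_eq_norm, dist_comm B A,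
      dist_comm C A, hAB, hAC, hBC] at h
    linarith
  have hdiff : AffineMap.lineMap A B s - AffineMap.lineMap A C r = s • (B - A) - r • (C - A) := by
    simp only [AffineMap.lineMap_apply_module]; module
  rw [dist_eq_norm, hdiff, norm_sub_sq_real, norm_smul, norm_smul, real_inner_smul_left,
    real_inner_smul_right, hinner, ← dist_eq_norm, ← dist_eq_norm, dist_comm B A, dist_comm C A,
    hAB, hAC, Real.norm_eq_abs, Real.norm_eq_abs, mul_pow, mul_pow, sq_abs, sq_abs]
  ring

variable [MeasurableSpace E] [BorelSpace E]

theorem hausdorffMeasure_triangleSection_le_ediam (h : ¬(u = 0 ∧ v = 0 ∧ w = 0)) :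
    μH[1] (triangleSection A B C u v w) ≤ ediam ({A, B, C} : Set E) := by
  rcases (triangleSection A B C u v w).eq_empty_or_nonempty with hempty | ⟨x, hx⟩
  · simp [hempty]
  have hline : ∃ d : E, triangleSection A B C u v w ⊆ range fun s : ℝ => x + s • d := by
    by_cases huv : u = v
    · have hwv : w ≠ v := by
        rintro rfl
        obtain ⟨a, b, c, -, -, -, hs, ht, -⟩ := hx
        have hu : u = 0 := by rw [← huv] at ht; linear_combination ht - u * hs
        exact h ⟨hu, huv ▸ hu, huv ▸ hu⟩
      rw [triangleSection_reverse] at hx ⊢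
      exact ⟨_, triangleSection_subset_line hwv hx⟩
    · exact ⟨_, triangleSection_subset_line huv hx⟩
  obtain ⟨d, hd⟩ := hline
  calc μH[1] (triangleSection A B C u v w) ≤ ediam (triangleSection A B C u v w) :=
        hausdorffMeasure_one_le_ediam_of_subset_line hd
    _ ≤ ediam (convexHull ℝ {A, B, C}) := ediam_mono triangleSection_subset_convexHull
    _ = ediam {A, B, C} := convexHull_ediam _

theorem hausdorffMeasure_triangleSection_eq_zero (huv : 0 < u * v) (huw : 0 ≤ u * w) :
    μH[1] (triangleSection A B C u v w) = 0 :=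
  have := Measure.nullSingletonClass_hausdorff E one_pos
  (subsingleton_singleton.anti (triangleSection_subset_singleton huv huw)).measure_zero _

theorem hausdorffMeasure_triangleSection_le_of_neg_of_pos (hAB : dist A B = ℓ)
    (hAC : dist A C = ℓ) (hBC : dist B C = ℓ) (hu : u < 0) (hv : 0 < v) (hvw : v ≤ w) :
    μH[1] (triangleSection A B C u v w) ≤ ENNReal.ofReal (ℓ * (u / (u - v))) := by
  set s := u / (u - v)
  set r := u / (u - w)
  have hr : 0 ≤ r := div_nonneg_of_nonpos hu.le (by linarith)
  have hrs : r ≤ s := by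
    simp only [r, s, ← neg_div_neg_eq u, neg_sub]
    exact div_le_div_of_nonneg_left (by linarith) (by linarith) (by linarith)
  have hℓ : 0 ≤ ℓ := hAB ▸ dist_nonneg
  have hdist : dist (AffineMap.lineMap A B s) (AffineMap.lineMap A C r) ≤ ℓ * s := by
    refine (pow_le_pow_iff_left₀ dist_nonneg (mul_nonneg hℓ (hr.trans hrs)) two_ne_zero).1 ?_
    rw [dist_lineMap_lineMap_sq hAB hAC hBC, mul_pow]
    nlinarith [mul_nonpos_of_nonneg_of_nonpos (sq_nonneg ℓ)
      (mul_nonpos_of_nonneg_of_nonpos hr (sub_nonpos.2 hrs))]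
  calc μH[1] (triangleSection A B C u v w)
      ≤ μH[1] (segment ℝ (AffineMap.lineMap A B s) (AffineMap.lineMap A C r)) :=
        measure_mono (triangleSection_subset_segment hu hv (hv.trans_le hvw))
    _ = ENNReal.ofReal (dist (AffineMap.lineMap A B s) (AffineMap.lineMap A C r)) := by
        rw [hausdorffMeasure_segment, edist_dist]
    _ ≤ ENNReal.ofReal (ℓ * s) := ENNReal.ofReal_le_ofReal hdist

end EquilateralTriangle

section Tetrahedron

variable {E : Type*} [NormedAddCommGroup E] [InnerProductSpace ℝ E]

def faceSections (p : Fin 4 → E) (t : Fin 4 → ℝ) : Set E :=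
  triangleSection (p 1) (p 2) (p 3) (t 1) (t 2) (t 3) ∪
    triangleSection (p 0) (p 2) (p 3) (t 0) (t 2) (t 3) ∪
    triangleSection (p 0) (p 1) (p 3) (t 0) (t 1) (t 3) ∪
    triangleSection (p 0) (p 1) (p 2) (t 0) (t 1) (t 2)

theorem sum_smul_mem_faceSections {p : Fin 4 → E} {t a : Fin 4 → ℝ} (ha : ∀ i, 0 ≤ a i)
    (hs : ∑ i, a i = 1) (ht : ∑ i, a i * t i = 0) (hzero : ∃ k, a k = 0) :
    ∑ i, a i • p i ∈ faceSections p t := by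
  simp only [Fin.sum_univ_four] at hs ht ⊢
  obtain ⟨k, hk⟩ := hzero
  fin_cases k <;> simp only [Fin.zero_eta, Fin.mk_one, Fin.reduceFinMk] at hk <;>
    rw [hk] at hs ht ⊢
  · exact .inl <| .inl <| .inl
      ⟨a 1, a 2, a 3, ha 1, ha 2, ha 3, by linarith, by linarith, by module⟩
  · exact .inl <| .inl <| .inr
      ⟨a 0, a 2, a 3, ha 0, ha 2, ha 3, by linarith, by linarith, by module⟩
  · exact .inl <| .inr
      ⟨a 0, a 1, a 3, ha 0, ha 1, ha 3, by linarith, by linarith, by module⟩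
  · exact .inr
      ⟨a 0, a 1, a 2, ha 0, ha 1, ha 2, by linarith, by linarith, by module⟩

theorem inter_frontier_convexHull_subset_faceSections (b : AffineBasis (Fin 4) ℝ E) (n : E)
    (c : ℝ) :
    {x | ⟪x, n⟫ = c} ∩ frontier (convexHull ℝ (range b)) ⊆
      faceSections b fun i => ⟪b i, n⟫ - c := by
  rintro x ⟨hxP, hx⟩
  rw [b.frontier_convexHull] at hx
  have hcomb := b.linear_combination_coord_eq_self x
  have hsum := b.sum_coord_apply_eq_one x
  rw [← hcomb]
  refine sum_smul_mem_faceSections hx.1 hsum ?_ hx.2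
  have hinner : ⟪x, n⟫ = ∑ i, b.coord i x * ⟪b i, n⟫ := by
    conv_lhs => rw [← hcomb]
    simp only [sum_inner, real_inner_smul_left]
  simp only [mul_sub, Finset.sum_sub_distrib, ← Finset.sum_mul, hsum, ← hinner, hxP.symm]
  ring

variable [MeasurableSpace E] [BorelSpace E] {p : Fin 4 → E} {ℓ : ℝ} {t : Fin 4 → ℝ}

theorem hausdorffMeasure_faceSections_le_of_quadrilateral
    (hp : Pairwise fun i j => dist (p i) (p j) = ℓ) (h01 : t 0 ≤ t 1) (h1 : t 1 < 0)
    (h2 : 0 < t 2) (h23 : t 2 ≤ t 3) :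
    μH[1] (faceSections p t) ≤ ENNReal.ofReal (3 * ℓ) := by
  have d : ∀ i j : Fin 4, i ≠ j → dist (p i) (p j) = ℓ := fun i j h => hp h
  have hℓ : 0 ≤ ℓ := d 0 1 (by decide) ▸ dist_nonneg
  have hnonneg : ∀ {u v : ℝ}, u < 0 → 0 < v → 0 ≤ ℓ * (u / (u - v)) := fun hu hv =>
    mul_nonneg hℓ (div_nonneg_of_nonpos hu.le (by linarith))
  have h0 : t 0 < 0 := h01.trans_lt h1
  have h3 : 0 < t 3 := h2.trans_le h23
  refine (measure_le_ofReal_of_subset_union₄ subset_rfl ?_ ?_ ?_ ?_ (hnonneg h1 h2) (hnonneg h0 h2)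
    (hnonneg (neg_lt_zero.2 h3) (neg_pos.2 h1)) (hnonneg (neg_lt_zero.2 h2) (neg_pos.2 h1))).trans
    (ENNReal.ofReal_le_ofReal ?_)
  · exact hausdorffMeasure_triangleSection_le_of_neg_of_pos (d 1 2 (by decide)) (d 1 3 (by decide))
      (d 2 3 (by decide)) h1 h2 h23
  · exact hausdorffMeasure_triangleSection_le_of_neg_of_pos (d 0 2 (by decide)) (d 0 3 (by decide))
      (d 2 3 (by decide)) h0 h2 h23
  · rw [triangleSection_reverse, ← triangleSection_neg]
    exact hausdorffMeasure_triangleSection_le_of_neg_of_pos (d 3 1 (by decide))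
      (d 3 0 (by decide)) (d 1 0 (by decide)) (neg_lt_zero.2 h3) (neg_pos.2 h1) (neg_le_neg h01)
  · rw [triangleSection_reverse, ← triangleSection_neg]
    exact hausdorffMeasure_triangleSection_le_of_neg_of_pos (d 2 1 (by decide))
      (d 2 0 (by decide)) (d 1 0 (by decide)) (neg_lt_zero.2 h2) (neg_pos.2 h1) (neg_le_neg h01)
  · have hpair : t 1 / (t 1 - t 2) + -t 2 / (-t 2 - -t 1) = 1 := by
      rw [neg_sub_neg, ← add_div, ← sub_eq_add_neg, div_self (by linarith)]
    have hb₁ : t 0 / (t 0 - t 2) ≤ 1 := (div_le_one_of_neg (by linarith)).2 (by linarith)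
    have hb₂ : -t 3 / (-t 3 - -t 1) ≤ 1 := (div_le_one_of_neg (by linarith)).2 (by linarith)
    nlinarith

theorem hausdorffMeasure_faceSections_le (hp : Pairwise fun i j => dist (p i) (p j) = ℓ)
    (ht : Monotone t) (h012 : ¬(t 0 = 0 ∧ t 1 = 0 ∧ t 2 = 0))
    (h123 : ¬(t 1 = 0 ∧ t 2 = 0 ∧ t 3 = 0)) :
    μH[1] (faceSections p t) ≤ ENNReal.ofReal (3 * ℓ) := by
  have h01 : t 0 ≤ t 1 := ht (by decide)
  have h12 : t 1 ≤ t 2 := ht (by decide)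
  have h23 : t 2 ≤ t 3 := ht (by decide)
  have hℓ : 0 ≤ ℓ := hp (by decide : (0 : Fin 4) ≠ 1) ▸ dist_nonneg
  have hface : ∀ i j k : Fin 4, ¬(t i = 0 ∧ t j = 0 ∧ t k = 0) →
      μH[1] (triangleSection (p i) (p j) (p k) (t i) (t j) (t k)) ≤ ENNReal.ofReal ℓ :=
    fun i j k h => (hausdorffMeasure_triangleSection_le_ediam h).trans <|
      (ediam_mono <| by simp [insert_subset_iff]).trans (ediam_range_le_of_pairwise_dist_eq hp)
  have hsum : ℓ + ℓ + ℓ + 0 = 3 * ℓ := by ring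
  have hsum' : 0 + ℓ + ℓ + ℓ = 3 * ℓ := by ring
  rcases lt_or_ge (t 1) 0 with h1 | h1 <;> rcases le_or_gt (t 2) 0 with h2 | h2
  · have h0 : t 0 < 0 := h01.trans_lt h1
    refine hsum ▸ measure_le_ofReal_of_subset_union₄ subset_rfl (hface 1 2 3 fun h => h1.ne h.1)
      (hface 0 2 3 fun h => h0.ne h.1) (hface 0 1 3 fun h => h0.ne h.1) ?_ hℓ hℓ hℓ le_rfl
    exact (hausdorffMeasure_triangleSection_eq_zero (mul_pos_of_neg_of_neg h0 h1)
      (mul_nonneg_of_nonpos_of_nonpos h0.le h2)).trans_le zero_le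
  · exact hausdorffMeasure_faceSections_le_of_quadrilateral hp h01 h1 h2 h23
  · have h1 : t 1 = 0 := le_antisymm (h12.trans h2) h1
    have h2 : t 2 = 0 := le_antisymm h2 (h1 ▸ h12)
    have h0 : t 0 ≠ 0 := fun h0 => h012 ⟨h0, h1, h2⟩
    have h3 : t 3 ≠ 0 := fun h3 => h123 ⟨h1, h2, h3⟩
    have hedge : triangleSection (p 0) (p 1) (p 2) (t 0) (t 1) (t 2) ⊆
        triangleSection (p 1) (p 2) (p 3) (t 1) (t 2) (t 3) := by
      rw [h1, h2]
      exact triangleSection_zero_zero_subset h0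
    refine hsum ▸ measure_le_ofReal_of_subset_union₄ ?_ (hface 1 2 3 fun h => h3 h.2.2)
      (hface 0 2 3 fun h => h0 h.1) (hface 0 1 3 fun h => h0 h.1)
      (measure_empty.trans_le zero_le) hℓ hℓ hℓ le_rfl
    rw [union_empty]
    exact union_subset subset_rfl (hedge.trans (subset_union_left.trans subset_union_left))
  · have h3 : 0 < t 3 := h2.trans_le h23
    refine hsum' ▸ measure_le_ofReal_of_subset_union₄ subset_rfl ?_
      (hface 0 2 3 fun h => h2.ne' h.2.1) (hface 0 1 3 fun h => h3.ne' h.2.2)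
      (hface 0 1 2 fun h => h2.ne' h.2.2) le_rfl hℓ hℓ hℓ
    rw [triangleSection_reverse]
    exact (hausdorffMeasure_triangleSection_eq_zero (mul_pos h3 h2)
      (mul_nonneg h3.le h1)).trans_le zero_le

end Tetrahedron

theorem length_plane_inter_tetrahedron_boundary_le_general
    (ℓ : ℝ) (hℓ : 0 < ℓ) (p : Fin 4 → EuclideanSpace ℝ (Fin 3))
    (hdist : ∀ i j, i ≠ j → dist (p i) (p j) = ℓ)
    (n : EuclideanSpace ℝ (Fin 3)) (c : ℝ)
    (P : Set (EuclideanSpace ℝ (Fin 3))) (hP : P = {x | ⟪x, n⟫ = c})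
    (hface : ∀ i j k : Fin 4, i ≠ j → j ≠ k → i ≠ k →
      ¬ ({p i, p j, p k} : Set (EuclideanSpace ℝ (Fin 3))) ⊆ P) :
    μH[1] (P ∩ frontier (convexHull ℝ (Set.range p))) ≤ ENNReal.ofReal (3 * ℓ) := by
  subst hP
  set t : Fin 4 → ℝ := fun i => ⟪p i, n⟫ - c
  set σ := Tuple.sort t
  have hq : Pairwise fun i j => dist ((p ∘ σ) i) ((p ∘ σ) j) = ℓ := fun i j hij =>
    hdist _ _ (σ.injective.ne hij)
  have hind := affineIndependent_of_pairwise_dist_eq hℓ.ne' hq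
  let b : AffineBasis (Fin 4) ℝ (EuclideanSpace ℝ (Fin 3)) :=
    ⟨p ∘ σ, hind, by rw [hind.affineSpan_eq_top_iff_card_eq_finrank_add_one]; simp⟩
  have hnoFace : ∀ i j k : Fin 4, i ≠ j → j ≠ k → i ≠ k →
      ¬(t (σ i) = 0 ∧ t (σ j) = 0 ∧ t (σ k) = 0) := by
    rintro i j k hij hjk hik ⟨hi, hj, hk⟩
    refine hface _ _ _ (σ.injective.ne hij) (σ.injective.ne hjk) (σ.injective.ne hik) ?_
    rintro _ (rfl | rfl | rfl) <;> simp_all [t, sub_eq_zero]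
  calc μH[1] ({x | ⟪x, n⟫ = c} ∩ frontier (convexHull ℝ (range p)))
      ≤ μH[1] (faceSections (p ∘ σ) (t ∘ σ)) := by
        refine measure_mono ?_
        rw [← σ.surjective.range_comp p]
        exact inter_frontier_convexHull_subset_faceSections b n c
    _ ≤ ENNReal.ofReal (3 * ℓ) :=
        hausdorffMeasure_faceSections_le hq (Tuple.monotone_sort t)
          (hnoFace 0 1 2 (by decide) (by decide) (by decide))
          (hnoFace 1 2 3 (by decide) (by decide) (by decide))

/-- Let `Q ⊂ ℝ³` be a solid regular tetrahedron of side length `ℓ > 0`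
(the convex hull of four points pairwise at distance `ℓ`) and let `P` be an affine plane
(`{x | ⟪x, n⟫ = c}` with `n ≠ 0`) containing no face of `Q`. Then the length
(1-dimensional Hausdorff measure) of `P ∩ ∂Q` is at most `3ℓ`. -/
theorem length_plane_inter_tetrahedron_boundary_le
    (ℓ : ℝ) (hℓ : 0 < ℓ) (p : Fin 4 → EuclideanSpace ℝ (Fin 3))
    (hdist : ∀ i j, i ≠ j → dist (p i) (p j) = ℓ)
    (n : EuclideanSpace ℝ (Fin 3)) (hn : n ≠ 0) (c : ℝ)
    (P : Set (EuclideanSpace ℝ (Fin 3))) (hP : P = {x | ⟪x, n⟫ = c})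
    (hface : ∀ i j k : Fin 4, i ≠ j → j ≠ k → i ≠ k →
      ¬ ({p i, p j, p k} : Set (EuclideanSpace ℝ (Fin 3))) ⊆ P) :
    μH[1] (P ∩ frontier (convexHull ℝ (Set.range p))) ≤ ENNReal.ofReal (3 * ℓ) :=
  length_plane_inter_tetrahedron_boundary_le_general ℓ hℓ p hdist n c P hP hface
end

section
/- Let T be an equilateral triangle with side length √3 and let p₁, p₂ be points on two distinct edges of T, neither a vertex. Let l₁, l₂ be the lines through p₁, p₂ perpendicular to the respective edges, and suppose they meet at a point p in T. Then |p₁p| + |p₂p| ≤ 3/2. -/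
open scoped RealInnerProductSpace

/-- Let `T` be an equilateral triangle of side length `√3`, with vertices
`A`, `B`, `C`. Let `p₁`, `p₂` be interior points of two distinct edges (any two distinct
edges share a vertex, which we name `A`, so `p₁` lies in the open edge `AB` and `p₂` in the
open edge `AC`). If the lines through `p₁`, `p₂` perpendicular to the respective edges meet
at a point `q ∈ T`, then `|p₁q| + |p₂q| ≤ 3/2`. -/
theorem sum_perpendicular_segments_le (A B C p₁ p₂ q : EuclideanSpace ℝ (Fin 2))
    (hAB : dist A B = Real.sqrt 3) (hAC : dist A C = Real.sqrt 3)
    (hBC : dist B C = Real.sqrt 3)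
    (hp₁ : p₁ ∈ openSegment ℝ A B) (hp₂ : p₂ ∈ openSegment ℝ A C)
    (hq : q ∈ convexHull ℝ ({A, B, C} : Set (EuclideanSpace ℝ (Fin 2))))
    (hperp₁ : ⟪q - p₁, B - A⟫ = 0) (hperp₂ : ⟪q - p₂, C - A⟫ = 0) :
    dist p₁ q + dist p₂ q ≤ 3 / 2 := by
  -- basic inner products
  have hu : ⟪B - A, B - A⟫ = 3 := by
    have h : ‖B - A‖ = Real.sqrt 3 := by rw [← dist_eq_norm, dist_comm]; exact hAB
    rw [real_inner_self_eq_norm_sq, h, Real.sq_sqrt (by norm_num)]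
  have hv : ⟪C - A, C - A⟫ = 3 := by
    have h : ‖C - A‖ = Real.sqrt 3 := by rw [← dist_eq_norm, dist_comm]; exact hAC
    rw [real_inner_self_eq_norm_sq, h, Real.sq_sqrt (by norm_num)]
  have huv : ⟪B - A, C - A⟫ = 3 / 2 := by
    have h : ‖(B - A) - (C - A)‖ = Real.sqrt 3 := by
      have he : (B - A) - (C - A) = B - C := by abel
      rw [he, ← dist_eq_norm]; exact hBC
    have h2 := norm_sub_sq_real (B - A) (C - A)
    rw [h, Real.sq_sqrt (by norm_num)] at h2
    have hu' : ‖B - A‖ ^ 2 = 3 := by rw [← real_inner_self_eq_norm_sq, hu]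
    have hv' : ‖C - A‖ ^ 2 = 3 := by rw [← real_inner_self_eq_norm_sq, hv]
    rw [hu', hv'] at h2; linarith
  have hvu : ⟪C - A, B - A⟫ = 3 / 2 := by rw [real_inner_comm]; exact huv
  -- decompose the points
  obtain ⟨a, b, ha, hb, hab, hp1⟩ := hp₁
  obtain ⟨a', c, ha', hc, hac, hp2⟩ := hp₂
  rw [show ({A, B, C} : Set (EuclideanSpace ℝ (Fin 2))) = insert A {B, C} from rfl,
    convexHull_insert ⟨B, by simp⟩, convexHull_pair] at hq
  rw [mem_convexJoin] at hq
  obtain ⟨A', hA', z, hz, hqz⟩ := hq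
  rw [Set.mem_singleton_iff] at hA'
  rw [hA'] at hqz
  obtain ⟨β, γ, hβ, hγ, hβγ, hzeq⟩ := hz
  obtain ⟨α, δ, hα, hδ, hαδ, hqeq⟩ := hqz
  have hγ' : γ = 1 - β := by linarith
  subst hγ'
  have hα' : α = 1 - δ := by linarith
  subst hα'
  have ha2 : a = 1 - b := by linarith
  subst ha2
  have ha2' : a' = 1 - c := by linarith
  subst ha2'
  set x : ℝ := δ * β with hx
  set y : ℝ := δ * (1 - β) with hy
  have hxy : x + y ≤ 1 := by nlinarith
  have hx0 : 0 ≤ x := by positivity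
  have hy0 : 0 ≤ y := by positivity
  have hqA : q - A = x • (B - A) + y • (C - A) := by
    rw [← hqeq, ← hzeq, hx, hy]; module
  have hq1 : q - p₁ = (x - b) • (B - A) + y • (C - A) := by
    rw [show q - p₁ = (q - A) - (p₁ - A) by abel, hqA, ← hp1]; module
  have hq2 : q - p₂ = x • (B - A) + (y - c) • (C - A) := by
    rw [show q - p₂ = (q - A) - (p₂ - A) by abel, hqA, ← hp2]; module
  have hbval : b = x + y / 2 := by
    rw [hq1] at hperp₁
    simp only [inner_add_left, real_inner_smul_left, hu] at hperp₁
    rw [hvu] at hperp₁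
    linarith
  have hcval : c = y + x / 2 := by
    rw [hq2] at hperp₂
    simp only [inner_add_left, real_inner_smul_left, hv, huv] at hperp₂
    linarith
  have hd1 : dist p₁ q = 3 / 2 * y := by
    have hinner : ⟪q - p₁, q - p₁⟫ = (3 / 2 * y) ^ 2 := by
      rw [hq1]
      simp only [inner_add_left, inner_add_right, real_inner_smul_left,
        real_inner_smul_right, hu, hv, huv]
      rw [hvu, hbval]; ring
    rw [dist_comm, dist_eq_norm, norm_eq_sqrt_real_inner, hinner,
      Real.sqrt_sq (by linarith)]
  have hd2 : dist p₂ q = 3 / 2 * x := by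
    have hinner : ⟪q - p₂, q - p₂⟫ = (3 / 2 * x) ^ 2 := by
      rw [hq2]
      simp only [inner_add_left, inner_add_right, real_inner_smul_left,
        real_inner_smul_right, hu, hv, huv]
      rw [hvu, hcval]; ring
    rw [dist_comm, dist_eq_norm, norm_eq_sqrt_real_inner, hinner,
      Real.sqrt_sq (by linarith)]
  rw [hd1, hd2]; linarith
end

section
/- Let T ⊂ ℝ² be the triangle with vertices A = (0,0), B = (√3, 0), C = (√3/2, 3/2), and let G be the group of isometries of ℝ² generated by reflections across the three lines containing the edges of T. Then the orbit G·A of the vertex A is the lattice {a·(0,3) + b·(3√3/2, 3/2) : a, b ∈ ℤ}. -/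
/-!
Write `u = (0, 3)` and `v = (3√3/2, 3/2)`, and let `L = ℤu + ℤv`. In the coordinates
`(a, b) ↦ a • u + b • v` the reflections in the edges `AB`, `AC`, `BC` act on `L` by
`(a, b) ↦ (-a - b, b)`, `(b, a)`, `(a, 1 - a - b)`, so `G` preserves `L`, and `A = 0 ∈ L` gives
`G·A ⊆ L`. Conversely `σ_BC σ_AC σ_AB σ_AC` and `σ_AC σ_AB σ_BC σ_AB` are the translations by `v`
and `u - v`, which generate `L`, so `L ⊆ G·A`.
-/

open EuclideanGeometry Set

namespace EuclideanGeometry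

variable {V P : Type*} [NormedAddCommGroup V] [InnerProductSpace ℝ V] [MetricSpace P]
  [NormedAddTorsor V P]

theorem reflection_affineSpan_pair_eq_of_inner_eq_zero {p q x y : P} (hy : y ∈ line[ℝ, p, q])
    (h : inner ℝ (q -ᵥ p) (x -ᵥ y) = 0) :
    reflection line[ℝ, p, q] x = (y -ᵥ x) +ᵥ y := by
  have hfoot : (orthogonalProjection line[ℝ, p, q] x : P) = y := by
    refine coe_orthogonalProjection_eq_iff_mem.2 ⟨hy, ?_⟩
    rwa [direction_affineSpan, vectorSpan_pair_rev,
      Submodule.mem_orthogonal_singleton_iff_inner_right]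
  rw [reflection_apply', hfoot]

end EuclideanGeometry

namespace AffineIsometryEquiv

variable {𝕜 V P : Type*} [NormedField 𝕜] [SeminormedAddCommGroup V] [NormedSpace 𝕜 V]
  [PseudoMetricSpace P] [NormedAddTorsor V P]

theorem constVAdd_zpow (v : V) (n : ℤ) : constVAdd 𝕜 P v ^ n = constVAdd 𝕜 P (n • v) := by
  let f : Multiplicative V →* P ≃ᵃⁱ[𝕜] P :=
    { toFun := fun v => constVAdd 𝕜 P v.toAdd
      map_one' := constVAdd_zero
      map_mul' := fun _ _ => ext fun _ => (vadd_vadd _ _ _).symm }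
  exact (map_zpow f (Multiplicative.ofAdd v) n).symm

theorem mapsTo_of_mem_closure {s : Set (P ≃ᵃⁱ[𝕜] P)} {L : Set P}
    (hs : ∀ g ∈ s, MapsTo g L L) (hs_inv : ∀ g ∈ s, MapsTo ⇑g⁻¹ L L) {g : P ≃ᵃⁱ[𝕜] P}
    (hg : g ∈ Subgroup.closure s) : MapsTo g L L := by
  induction hg using Subgroup.closure_induction'' with
  | mem g hg => exact hs g hg
  | inv_mem g hg => exact hs_inv g hg
  | one => exact mapsTo_id L
  | mul g h _ _ hg hh => exact hg.comp hh

end AffineIsometryEquiv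

local notation "V2" => EuclideanSpace ℝ (Fin 2)

local notation "σ_AB" => reflection line[ℝ, (!₂[0, 0] : V2), !₂[√3, 0]]
local notation "σ_AC" => reflection line[ℝ, (!₂[0, 0] : V2), !₂[√3 / 2, 3 / 2]]
local notation "σ_BC" => reflection line[ℝ, (!₂[√3, 0] : V2), !₂[√3 / 2, 3 / 2]]

lemma sqrt_three_mul_self : √3 * √3 = 3 := Real.mul_self_sqrt (by norm_num)

theorem reflection_AB_apply (x : V2) : σ_AB x = !₂[x 0, -x 1] := by
  rw [reflection_affineSpan_pair_eq_of_inner_eq_zero (y := !₂[x 0, 0]) ?_ ?_]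
  · ext i; fin_cases i <;> simp
  · convert AffineMap.lineMap_mem_affineSpan_pair (x 0 / √3) _ _ using 1
    ext i; fin_cases i <;> simp [AffineMap.lineMap_apply]
  · simp [PiLp.inner_apply, Fin.sum_univ_two]

theorem reflection_AC_apply (x : V2) :
    σ_AC x = !₂[-x 0 / 2 + √3 * x 1 / 2, √3 * x 0 / 2 + x 1 / 2] := by
  have h3 := sqrt_three_mul_self
  rw [reflection_affineSpan_pair_eq_of_inner_eq_zero
    (y := !₂[x 0 / 4 + √3 * x 1 / 4, √3 * x 0 / 4 + 3 * x 1 / 4]) ?_ ?_]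
  · ext i; fin_cases i <;> simp only [Fin.isValue, Fin.zero_eta, Fin.mk_one, Matrix.cons_val_zero,
      Matrix.cons_val_one, Matrix.cons_val_fin_one, vsub_eq_sub, vadd_eq_add, PiLp.add_apply,
      PiLp.sub_apply] <;> ring
  · convert AffineMap.lineMap_mem_affineSpan_pair (√3 * x 0 / 6 + x 1 / 2) _ _ using 1
    ext i; fin_cases i <;> simp only [Fin.isValue, Fin.zero_eta, Fin.mk_one, Matrix.cons_val_zero,
        Matrix.cons_val_one, Matrix.cons_val_fin_one, AffineMap.lineMap_apply, vsub_eq_sub,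
        vadd_eq_add, PiLp.add_apply, PiLp.sub_apply, PiLp.smul_apply, smul_eq_mul]
    · linear_combination (-x 0 / 12) * h3
    · ring
  · simp only [Fin.isValue, Matrix.cons_val_zero, Matrix.cons_val_one, Matrix.cons_val_fin_one,
      vsub_eq_sub, PiLp.sub_apply, PiLp.inner_apply, RCLike.inner_apply, Real.ringHom_apply,
      Fin.sum_univ_two]
    linear_combination (-x 1 / 8) * h3

theorem reflection_BC_apply (x : V2) :
    σ_BC x = !₂[-x 0 / 2 - √3 * x 1 / 2 + 3 * √3 / 2, -(√3 * x 0) / 2 + x 1 / 2 + 3 / 2] := by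
  have h3 := sqrt_three_mul_self
  rw [reflection_affineSpan_pair_eq_of_inner_eq_zero
    (y := !₂[x 0 / 4 - √3 * x 1 / 4 + 3 * √3 / 4, -(√3 * x 0) / 4 + 3 * x 1 / 4 + 3 / 4])
    ?_ ?_]
  · ext i; fin_cases i <;> simp only [Fin.isValue, Fin.zero_eta, Fin.mk_one, Matrix.cons_val_zero,
      Matrix.cons_val_one, Matrix.cons_val_fin_one, vsub_eq_sub, vadd_eq_add, PiLp.add_apply,
      PiLp.sub_apply] <;> ring
  · convert AffineMap.lineMap_mem_affineSpan_pair (x 1 / 2 - √3 * x 0 / 6 + 1 / 2) _ _ using 1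
    ext i; fin_cases i <;> simp only [Fin.isValue, Fin.zero_eta, Fin.mk_one, Matrix.cons_val_zero,
        Matrix.cons_val_one, Matrix.cons_val_fin_one, AffineMap.lineMap_apply, vsub_eq_sub,
        vadd_eq_add, PiLp.add_apply, PiLp.sub_apply, PiLp.smul_apply, smul_eq_mul]
    · linear_combination (-x 0 / 12) * h3
    · ring
  · simp only [Fin.isValue, Matrix.cons_val_zero, Matrix.cons_val_one, Matrix.cons_val_fin_one,
      vsub_eq_sub, PiLp.sub_apply, PiLp.inner_apply, RCLike.inner_apply, Real.ringHom_apply,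
      Fin.sum_univ_two]
    linear_combination ((3 - x 1) / 8) * h3

def triangularLattice : Set V2 :=
  {x | ∃ a b : ℤ, x = (a : ℝ) • (!₂[0, 3] : V2) + (b : ℝ) • (!₂[3 * √3 / 2, 3 / 2] : V2)}

theorem mapsTo_reflection_AB : MapsTo σ_AB triangularLattice triangularLattice := by
  rintro _ ⟨a, b, rfl⟩
  refine ⟨-a - b, b, ?_⟩
  rw [reflection_AB_apply]
  ext i; fin_cases i
  · simp
  · simp only [Fin.isValue, Fin.mk_one, Matrix.cons_val_one, Matrix.cons_val_fin_one,
      PiLp.add_apply, PiLp.smul_apply, smul_eq_mul, Int.cast_sub, Int.cast_neg]; ring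

theorem mapsTo_reflection_AC : MapsTo σ_AC triangularLattice triangularLattice := by
  rintro _ ⟨a, b, rfl⟩
  refine ⟨b, a, ?_⟩
  rw [reflection_AC_apply]
  ext i; fin_cases i <;> simp only [Fin.isValue, Fin.zero_eta, Fin.mk_one, Matrix.cons_val_zero,
      Matrix.cons_val_one, Matrix.cons_val_fin_one, PiLp.add_apply, PiLp.smul_apply, smul_eq_mul]
  · ring
  · linear_combination (3 * (b : ℝ) / 4) * sqrt_three_mul_self

theorem mapsTo_reflection_BC : MapsTo σ_BC triangularLattice triangularLattice := by
  rintro _ ⟨a, b, rfl⟩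
  refine ⟨a, 1 - a - b, ?_⟩
  rw [reflection_BC_apply]
  ext i; fin_cases i <;> simp only [Fin.isValue, Fin.zero_eta, Fin.mk_one, Matrix.cons_val_zero,
      Matrix.cons_val_one, Matrix.cons_val_fin_one, PiLp.add_apply, PiLp.smul_apply, smul_eq_mul,
      Int.cast_sub, Int.cast_one]
  · ring
  · linear_combination (-3 * (b : ℝ) / 4) * sqrt_three_mul_self

theorem mapsTo_triangularLattice_of_mem_edgeReflections {σ : V2 ≃ᵃⁱ[ℝ] V2}
    (hσ : σ ∈ ({σ_AB, σ_AC, σ_BC} : Set (V2 ≃ᵃⁱ[ℝ] V2))) :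
    MapsTo σ triangularLattice triangularLattice ∧
      MapsTo ⇑σ⁻¹ triangularLattice triangularLattice := by
  rcases hσ with rfl | rfl | rfl <;>
    simp only [AffineIsometryEquiv.coe_inv, reflection_symm, and_self]
  exacts [mapsTo_reflection_AB, mapsTo_reflection_AC, mapsTo_reflection_BC]

theorem reflections_BC_AC_AB_AC_eq_constVAdd :
    σ_BC * σ_AC * σ_AB * σ_AC = AffineIsometryEquiv.constVAdd ℝ V2 !₂[3 * √3 / 2, 3 / 2] := by
  have h3 := sqrt_three_mul_self
  refine AffineIsometryEquiv.ext fun (x : V2) => ?_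
  -- Rewriting innermost-first on this pointwise form keeps the nested coordinates small;
  -- unfolding `⇑(σ * τ)` by `simp` instead duplicates them exponentially.
  show σ_BC (σ_AC (σ_AB (σ_AC x))) = !₂[3 * √3 / 2, 3 / 2] + x
  simp only [reflection_AB_apply, reflection_AC_apply, reflection_BC_apply,
    Matrix.cons_val_zero, Matrix.cons_val_one]
  ext i
  fin_cases i <;> simp only [Fin.isValue, Fin.zero_eta, Fin.mk_one, Matrix.cons_val_zero,
      Matrix.cons_val_one, Matrix.cons_val_fin_one, PiLp.add_apply]
  · linear_combination ((3 * x 0 - √3 * x 1) / 8) * h3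
  · linear_combination ((√3 * x 0 + 3 * x 1) / 8) * h3

theorem reflections_AC_AB_BC_AB_eq_constVAdd :
    σ_AC * σ_AB * σ_BC * σ_AB =
      AffineIsometryEquiv.constVAdd ℝ V2 (!₂[0, 3] - !₂[3 * √3 / 2, 3 / 2]) := by
  have h3 := sqrt_three_mul_self
  refine AffineIsometryEquiv.ext fun (x : V2) => ?_
  show σ_AC (σ_AB (σ_BC (σ_AB x))) = (!₂[0, 3] - !₂[3 * √3 / 2, 3 / 2]) + x
  simp only [reflection_AB_apply, reflection_AC_apply, reflection_BC_apply,
    Matrix.cons_val_zero, Matrix.cons_val_one]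
  ext i
  fin_cases i <;> simp only [Fin.isValue, Fin.zero_eta, Fin.mk_one, Matrix.cons_val_zero,
      Matrix.cons_val_one, Matrix.cons_val_fin_one, PiLp.add_apply, PiLp.sub_apply]
  · linear_combination (x 0 / 4) * h3
  · linear_combination ((x 1 + 3) / 4) * h3

/-- Let `T ⊂ ℝ²` be the triangle with vertices `A = (0,0)`,
`B = (√3, 0)`, `C = (√3/2, 3/2)` and let `G` be the group of isometries of `ℝ²` generated by
the reflections across the three lines containing the edges of `T`. Then the orbit `G·A` is
the lattice `{a•(0,3) + b•(3√3/2, 3/2) : a b : ℤ}`. -/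
theorem orbit_of_vertex_is_lattice
    (A B C : EuclideanSpace ℝ (Fin 2))
    (hA : A = !₂[0, 0]) (hB : B = !₂[Real.sqrt 3, 0])
    (hC : C = !₂[Real.sqrt 3 / 2, 3 / 2])
    (G : Subgroup (EuclideanSpace ℝ (Fin 2) ≃ᵃⁱ[ℝ] EuclideanSpace ℝ (Fin 2)))
    (hG : G = Subgroup.closure
      {EuclideanGeometry.reflection (affineSpan ℝ {A, B}),
       EuclideanGeometry.reflection (affineSpan ℝ {A, C}),
       EuclideanGeometry.reflection (affineSpan ℝ {B, C})}) :
    {x : EuclideanSpace ℝ (Fin 2) | ∃ g ∈ G, g A = x} =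
      {x : EuclideanSpace ℝ (Fin 2) | ∃ a b : ℤ,
        x = (a : ℝ) • (!₂[0, 3] : EuclideanSpace ℝ (Fin 2)) +
            (b : ℝ) • (!₂[3 * Real.sqrt 3 / 2, 3 / 2] : EuclideanSpace ℝ (Fin 2))} := by
  subst hA hB hC hG
  have hA₀ : (!₂[0, 0] : V2) = 0 := by ext i; fin_cases i <;> rfl
  ext x
  constructor
  · rintro ⟨g, hg, rfl⟩
    exact AffineIsometryEquiv.mapsTo_of_mem_closure
      (fun σ hσ => (mapsTo_triangularLattice_of_mem_edgeReflections hσ).1)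
      (fun σ hσ => (mapsTo_triangularLattice_of_mem_edgeReflections hσ).2) hg
      ⟨0, 0, by simp [hA₀]⟩
  · rintro ⟨a, b, rfl⟩
    have hAB : σ_AB ∈ Subgroup.closure {σ_AB, σ_AC, σ_BC} := Subgroup.subset_closure (by simp)
    have hAC : σ_AC ∈ Subgroup.closure {σ_AB, σ_AC, σ_BC} := Subgroup.subset_closure (by simp)
    have hBC : σ_BC ∈ Subgroup.closure {σ_AB, σ_AC, σ_BC} := Subgroup.subset_closure (by simp)
    refine ⟨(σ_AC * σ_AB * σ_BC * σ_AB) ^ a * (σ_BC * σ_AC * σ_AB * σ_AC) ^ (a + b),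
      mul_mem (zpow_mem (mul_mem (mul_mem (mul_mem hAC hAB) hBC) hAB) a)
        (zpow_mem (mul_mem (mul_mem (mul_mem hBC hAC) hAB) hAC) (a + b)), ?_⟩
    rw [reflections_AC_AB_BC_AB_eq_constVAdd, reflections_BC_AC_AB_AC_eq_constVAdd,
      AffineIsometryEquiv.constVAdd_zpow, AffineIsometryEquiv.constVAdd_zpow]
    simp only [AffineIsometryEquiv.coe_mul, Function.comp_apply,
      AffineIsometryEquiv.coe_constVAdd, vadd_eq_add, hA₀, add_zero, ← Int.cast_smul_eq_zsmul ℝ]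
    push_cast
    module
end

section
/- For every t ∈ [0, 1] and every cross-section of a regular tetrahedron Q of side length ℓ by a plane Π_t moving linearly in t (i.e., Π_t = {x : x·n = t·s₁ + (1−t)·s₀} for a fixed unit normal n), the perimeter function t ↦ perimeter(Π_t ∩ Q) is affine (linear in t) on any subinterval during which Π_t meets no vertex of Q. -/
/-!
The boundary of the tetrahedron is the union of its four facets. Two facets meet along an edge,
which a plane through no vertex crosses at most once, so the perimeter of the cross-section is the
sum of the lengths of its four facet sections. While the moving plane avoids the vertices, each
vertex stays on a fixed side of it, so a facet section is either empty or, when one vertex `x` is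
alone on its side, the segment between the crossing points `x + u • (y - x)` and `x + v • (z - x)`
on the two edges at `x`. Both `u` and `v` are proportional to the distance from `x` to the plane,
which is affine in `t`, hence so is the length of the segment.
-/

open Set MeasureTheory
open scoped RealInnerProductSpace

theorem IsPreconnected.forall_lt_or_forall_gt {X α : Type*} [TopologicalSpace X] [LinearOrder α]
    [TopologicalSpace α] [OrderClosedTopology α] {s : Set X} (hs : IsPreconnected s)
    {f g : X → α} (hf : ContinuousOn f s) (hg : ContinuousOn g s) (hne : ∀ x ∈ s, f x ≠ g x) :
    (∀ x ∈ s, f x < g x) ∨ ∀ x ∈ s, g x < f x := by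
  by_contra! h
  obtain ⟨⟨b, hb, hgb⟩, a, ha, hfa⟩ := h
  obtain ⟨x, hx, hfgx⟩ := hs.intermediate_value₂ ha hb hf hg hfa hgb
  exact hne x hx hfgx

section EquidistantPoints

open Finset

variable {E : Type*} [NormedAddCommGroup E] [InnerProductSpace ℝ E]

theorem sum_sum_mul_norm_sub_sq {ι : Type*} [Fintype ι] (p : ι → E) {w : ι → ℝ}
    (hw : ∑ i, w i = 0) :
    ∑ i, ∑ j, w i * w j * ‖p i - p j‖ ^ 2 = -2 * ‖∑ i, w i • p i‖ ^ 2 := by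
  have hinner : ‖∑ i, w i • p i‖ ^ 2 = ∑ i, ∑ j, w i * w j * ⟪p i, p j⟫ := by
    simp only [← real_inner_self_eq_norm_sq, sum_inner, inner_sum, real_inner_smul_left,
      real_inner_smul_right]
    exact sum_congr rfl fun i _ => sum_congr rfl fun j _ => by rw [real_inner_comm]; ring
  calc ∑ i, ∑ j, w i * w j * ‖p i - p j‖ ^ 2
      = ∑ i, ∑ j, (w i * ‖p i‖ ^ 2 * w j + w j * ‖p j‖ ^ 2 * w i
          - 2 * (w i * w j * ⟪p i, p j⟫)) := by
        refine sum_congr rfl fun i _ => sum_congr rfl fun j _ => ?_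
        rw [norm_sub_sq_real]; ring
    _ = -2 * ‖∑ i, w i • p i‖ ^ 2 := by
        simp only [sum_add_distrib, sum_sub_distrib, ← mul_sum, ← sum_mul, hw, hinner]
        ring

theorem affineIndependent_of_dist_eq {ι : Type*} [Fintype ι] {p : ι → E} {ℓ : ℝ} (hℓ : ℓ ≠ 0)
    (hp : ∀ i j, i ≠ j → dist (p i) (p j) = ℓ) : AffineIndependent ℝ p := by
  classical
  rw [affineIndependent_iff_of_fintype]
  intro w hw hwp
  rw [weightedVSub_eq_weightedVSubOfPoint_of_sum_eq_zero _ _ _ hw 0,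
    weightedVSubOfPoint_apply] at hwp
  simp only [vsub_eq_sub, sub_zero] at hwp
  have hterm (i j : ι) : w i * w j * ‖p i - p j‖ ^ 2 =
      ℓ ^ 2 * (w i * w j) - if i = j then ℓ ^ 2 * w i ^ 2 else 0 := by
    split_ifs with h
    · subst h
      simp only [sub_self, norm_zero]
      ring
    · rw [← dist_eq_norm, hp i j h]
      ring
  have key := sum_sum_mul_norm_sub_sq p hw
  simp only [hterm, hwp, sum_sub_distrib, sum_ite_eq, Finset.mem_univ, ite_true, ← mul_sum,
    ← sum_mul, hw, norm_zero] at key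
  have hsq : ∑ i, w i ^ 2 = 0 :=
    (mul_eq_zero.1 (by linarith : ℓ ^ 2 * ∑ i, w i ^ 2 = 0)).resolve_left (by positivity)
  intro i
  exact pow_eq_zero_iff two_ne_zero |>.1 <|
    (sum_eq_zero_iff_of_nonneg fun j _ => sq_nonneg (w j)).1 hsq i (Finset.mem_univ i)

end EquidistantPoints

theorem exists_eq_add_smul_add_smul_of_mem_convexHull_triple {E : Type*} [AddCommGroup E]
    [Module ℝ E] {x y z w : E} (hw : w ∈ convexHull ℝ {x, y, z}) :
    ∃ b c : ℝ, 0 ≤ b ∧ 0 ≤ c ∧ w = x + b • (y - x) + c • (z - x) := by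
  rw [convexHull_insert (insert_nonempty _ _), convexHull_pair, convexJoin_singleton_left,
    mem_iUnion₂] at hw
  obtain ⟨m, hm, hwm⟩ := hw
  rw [segment_eq_image'] at hm hwm
  obtain ⟨β, ⟨hβ0, hβ1⟩, rfl⟩ := hm
  obtain ⟨θ, ⟨hθ0, -⟩, rfl⟩ := hwm
  exact ⟨θ * (1 - β), θ * β, by nlinarith, by positivity, by module⟩

namespace LinearMap

variable {E : Type*} [AddCommGroup E] [Module ℝ E] (f : E →ₗ[ℝ] ℝ)

theorem neg_preimage_singleton_neg (c : ℝ) : (-f) ⁻¹' {-c} = f ⁻¹' {c} := by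
  ext w; simp

theorem preimage_singleton_inter_convexHull_eq_empty_of_lt {S : Set E} {c : ℝ}
    (hS : ∀ x ∈ S, f x < c) : f ⁻¹' {c} ∩ convexHull ℝ S = ∅ := by
  have hsub : convexHull ℝ S ⊆ f ⁻¹' Iio c :=
    convexHull_min hS ((convex_Iio c).linear_preimage f)
  exact eq_empty_of_forall_notMem fun w ⟨hw, hwS⟩ => (hsub hwS).ne hw

theorem preimage_singleton_inter_convexHull_eq_empty_of_gt {S : Set E} {c : ℝ}
    (hS : ∀ x ∈ S, c < f x) : f ⁻¹' {c} ∩ convexHull ℝ S = ∅ := by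
  have hsub : convexHull ℝ S ⊆ f ⁻¹' Ioi c :=
    convexHull_min hS ((convex_Ioi c).linear_preimage f)
  exact eq_empty_of_forall_notMem fun w ⟨hw, hwS⟩ => (hsub hwS).ne' hw

theorem subsingleton_preimage_singleton_inter_affineSegment {x y : E} {c : ℝ} (hx : f x ≠ c) :
    (f ⁻¹' {c} ∩ affineSegment ℝ x y).Subsingleton := by
  rintro _ ⟨hw₁, r₁, -, rfl⟩ _ ⟨hw₂, r₂, -, rfl⟩
  simp only [mem_preimage, mem_singleton_iff, AffineMap.lineMap_apply_module', map_add,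
    map_smul, map_sub, smul_eq_mul] at hw₁ hw₂
  rcases eq_or_ne (f y) (f x) with hxy | hxy
  · exact absurd (by simpa [hxy] using hw₁) hx
  · rw [mul_right_cancel₀ (sub_ne_zero.2 hxy) (by linarith : r₁ * (f y - f x) = r₂ * (f y - f x))]

theorem preimage_singleton_inter_convexHull_triple {x y z : E} {c : ℝ}
    (hx : f x < c) (hy : c < f y) (hz : c < f z) :
    f ⁻¹' {c} ∩ convexHull ℝ {x, y, z} =
      segment ℝ (AffineMap.lineMap x y ((c - f x) / (f y - f x)))
        (AffineMap.lineMap x z ((c - f x) / (f z - f x))) := by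
  set u := (c - f x) / (f y - f x)
  set v := (c - f x) / (f z - f x)
  have hu : u * (f y - f x) = c - f x := div_mul_cancel₀ _ (by linarith)
  have hv : v * (f z - f x) = c - f x := div_mul_cancel₀ _ (by linarith)
  have hu0 : 0 < u := div_pos (by linarith) (by linarith)
  have hv0 : 0 < v := div_pos (by linarith) (by linarith)
  apply Subset.antisymm
  · rintro w ⟨hfw, hw⟩
    obtain ⟨b, γ, hb, hγ, rfl⟩ := exists_eq_add_smul_add_smul_of_mem_convexHull_triple hw
    have hlevel : b * (f y - f x) + γ * (f z - f x) = c - f x := by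
      simp only [mem_preimage, mem_singleton_iff, map_add, map_smul, map_sub, smul_eq_mul] at hfw
      linarith
    have hsum : b / u + γ / v = 1 := by
      rw [← mul_div_mul_right b u (by linarith : f y - f x ≠ 0),
        ← mul_div_mul_right γ v (by linarith : f z - f x ≠ 0), hu, hv, ← add_div, hlevel,
        div_self (by linarith)]
    refine ⟨b / u, γ / v, by positivity, by positivity, hsum, ?_⟩
    have hbu : b / u * u = b := div_mul_cancel₀ b hu0.ne'
    have hγv : γ / v * v = γ := div_mul_cancel₀ γ hv0.ne'
    simp only [AffineMap.lineMap_apply_module']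
    match_scalars
    · linear_combination hbu
    · linear_combination hsum - hbu - hγv
    · linear_combination hγv
  · have hedge (e : E) (r : ℝ) : f (AffineMap.lineMap x e r) = r * (f e - f x) + f x := by
      simp only [AffineMap.lineMap_apply_module', map_add, map_smul, map_sub, smul_eq_mul]
    have hconv : Convex ℝ (f ⁻¹' {c} ∩ convexHull ℝ {x, y, z}) :=
      ((convex_singleton c).linear_preimage f).inter (convex_convexHull ℝ _)
    refine hconv.segment_subset ⟨?_, ?_⟩ ⟨?_, ?_⟩
    · simp only [mem_preimage, mem_singleton_iff, hedge]
      linarith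
    · exact segment_subset_convexHull (by simp) (by simp)
        (lineMap_mem_segment ℝ x y ⟨hu0.le, (div_le_one (by linarith)).2 (by linarith)⟩)
    · simp only [mem_preimage, mem_singleton_iff, hedge]
      linarith
    · exact segment_subset_convexHull (by simp) (by simp)
        (lineMap_mem_segment ℝ x z ⟨hv0.le, (div_le_one (by linarith)).2 (by linarith)⟩)

end LinearMap

section AffineLength

variable {E : Type*} [NormedAddCommGroup E] [MeasurableSpace E] [BorelSpace E]

-- Nonnegativity is recorded so that lengths can be added under `ENNReal.ofReal`.
def HasAffineLengthOn (A : ℝ → Set E) (I : Set ℝ) : Prop :=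
  ∃ c₀ c₁ : ℝ, ∀ t ∈ I, 0 ≤ c₀ + c₁ * t ∧ μH[1] (A t) = ENNReal.ofReal (c₀ + c₁ * t)

theorem hasAffineLengthOn_of_eq_empty {A : ℝ → Set E} {I : Set ℝ} (h : ∀ t ∈ I, A t = ∅) :
    HasAffineLengthOn A I :=
  ⟨0, 0, fun t ht => by simp [h t ht]⟩

theorem HasAffineLengthOn.iUnion {ι : Type*} [Fintype ι] {A : ι → ℝ → Set E} {I : Set ℝ}
    (hA : ∀ i, HasAffineLengthOn (A i) I) (hmeas : ∀ i, ∀ t ∈ I, MeasurableSet (A i t))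
    (hdisj : ∀ t ∈ I, Pairwise fun i j => (A i t ∩ A j t).Subsingleton) :
    HasAffineLengthOn (fun t => ⋃ i, A i t) I := by
  choose c₀ c₁ hc using hA
  have := Measure.nullSingletonClass_hausdorff E one_pos
  refine ⟨∑ i, c₀ i, ∑ i, c₁ i, fun t ht => ?_⟩
  have hsum : ∑ i, c₀ i + (∑ i, c₁ i) * t = ∑ i, (c₀ i + c₁ i * t) := by
    rw [Finset.sum_add_distrib, Finset.sum_mul]
  have hnonneg : ∀ i ∈ Finset.univ, 0 ≤ c₀ i + c₁ i * t := fun i _ => (hc i t ht).1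
  refine ⟨hsum ▸ Finset.sum_nonneg hnonneg, ?_⟩
  rw [measure_iUnion₀ (fun i j hij => (hdisj t ht hij).countable.measure_zero _)
    (fun i => (hmeas i t ht).nullMeasurableSet), tsum_fintype, hsum,
    ENNReal.ofReal_sum_of_nonneg hnonneg]
  exact Finset.sum_congr rfl fun i _ => (hc i t ht).2

variable [NormedSpace ℝ E]

theorem LinearMap.hausdorffMeasure_preimage_singleton_inter_convexHull_triple (f : E →ₗ[ℝ] ℝ)
    {x y z : E} {c : ℝ} (hx : f x < c) (hy : c < f y) (hz : c < f z) :
    μH[1] (f ⁻¹' {c} ∩ convexHull ℝ {x, y, z}) =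
      ENNReal.ofReal ((c - f x) * ‖(f y - f x)⁻¹ • (y - x) - (f z - f x)⁻¹ • (z - x)‖) := by
  rw [f.preimage_singleton_inter_convexHull_triple hx hy hz, hausdorffMeasure_segment,
    edist_dist, dist_eq_norm, AffineMap.lineMap_apply_module', AffineMap.lineMap_apply_module']
  have hchord : ((c - f x) / (f y - f x)) • (y - x) + x - (((c - f x) / (f z - f x)) • (z - x) + x)
      = (c - f x) • ((f y - f x)⁻¹ • (y - x) - (f z - f x)⁻¹ • (z - x)) := by
    module
  rw [hchord, norm_smul, Real.norm_of_nonneg (sub_nonneg.2 hx.le)]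

theorem LinearMap.hasAffineLengthOn_convexHull_triple_of_lt (f : E →ₗ[ℝ] ℝ) {x y z : E}
    {s₀ s₁ : ℝ} {I : Set ℝ} (hx : ∀ t ∈ I, f x < (1 - t) * s₀ + t * s₁)
    (hy : ∀ t ∈ I, (1 - t) * s₀ + t * s₁ < f y) (hz : ∀ t ∈ I, (1 - t) * s₀ + t * s₁ < f z) :
    HasAffineLengthOn (fun t => f ⁻¹' {(1 - t) * s₀ + t * s₁} ∩ convexHull ℝ {x, y, z}) I := by
  set C := ‖(f y - f x)⁻¹ • (y - x) - (f z - f x)⁻¹ • (z - x)‖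
  refine ⟨(s₀ - f x) * C, (s₁ - s₀) * C, fun t ht => ?_⟩
  have hlin : (s₀ - f x) * C + (s₁ - s₀) * C * t = ((1 - t) * s₀ + t * s₁ - f x) * C := by ring
  rw [hlin, f.hausdorffMeasure_preimage_singleton_inter_convexHull_triple (hx t ht) (hy t ht)
    (hz t ht)]
  exact ⟨mul_nonneg (sub_nonneg.2 (hx t ht).le) (norm_nonneg _), rfl⟩

theorem LinearMap.hasAffineLengthOn_convexHull_triple_of_gt (f : E →ₗ[ℝ] ℝ) {x y z : E}
    {s₀ s₁ : ℝ} {I : Set ℝ} (hx : ∀ t ∈ I, (1 - t) * s₀ + t * s₁ < f x)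
    (hy : ∀ t ∈ I, f y < (1 - t) * s₀ + t * s₁) (hz : ∀ t ∈ I, f z < (1 - t) * s₀ + t * s₁) :
    HasAffineLengthOn (fun t => f ⁻¹' {(1 - t) * s₀ + t * s₁} ∩ convexHull ℝ {x, y, z}) I := by
  have hneg (t : ℝ) : (-f) ⁻¹' {(1 - t) * -s₀ + t * -s₁} = f ⁻¹' {(1 - t) * s₀ + t * s₁} := by
    rw [← f.neg_preimage_singleton_neg]
    ring_nf
  simpa only [hneg] using (-f).hasAffineLengthOn_convexHull_triple_of_lt (s₀ := -s₀) (s₁ := -s₁)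
    (fun t ht => by simp only [neg_apply]; linarith [hx t ht])
    (fun t ht => by simp only [neg_apply]; linarith [hy t ht])
    (fun t ht => by simp only [neg_apply]; linarith [hz t ht])

theorem Affine.Simplex.hasAffineLengthOn_closedInterior (s : Affine.Simplex ℝ E 2)
    (f : E →ₗ[ℝ] ℝ) {s₀ s₁ : ℝ} {I : Set ℝ} (hI : IsPreconnected I)
    (hv : ∀ t ∈ I, ∀ i, f (s.points i) ≠ (1 - t) * s₀ + t * s₁) :
    HasAffineLengthOn (fun t => f ⁻¹' {(1 - t) * s₀ + t * s₁} ∩ s.closedInterior) I := by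
  have hsign (i : Fin 3) : (∀ t ∈ I, f (s.points i) < (1 - t) * s₀ + t * s₁) ∨
      ∀ t ∈ I, (1 - t) * s₀ + t * s₁ < f (s.points i) :=
    hI.forall_lt_or_forall_gt continuousOn_const (by fun_prop) fun t ht => hv t ht i
  have hrange : range s.points = {s.points 0, s.points 1, s.points 2} := by
    simp [Fin.range_fin_succ, Fin.tail]
  simp_rw [← convexHull_eq_closedInterior, hrange]
  have hyxz := insert_comm (s.points 1) (s.points 0) {s.points 2}
  have hzxy : ({s.points 2, s.points 0, s.points 1} : Set E) =
      {s.points 0, s.points 1, s.points 2} := by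
    rw [insert_comm, pair_comm]
  rcases hsign 0 with h₀ | h₀ <;> rcases hsign 1 with h₁ | h₁ <;> rcases hsign 2 with h₂ | h₂
  · exact hasAffineLengthOn_of_eq_empty fun t ht =>
      f.preimage_singleton_inter_convexHull_eq_empty_of_lt <| by
        rintro _ (rfl | rfl | rfl)
        exacts [h₀ t ht, h₁ t ht, h₂ t ht]
  · simpa only [hzxy] using f.hasAffineLengthOn_convexHull_triple_of_gt h₂ h₀ h₁
  · simpa only [hyxz] using f.hasAffineLengthOn_convexHull_triple_of_gt h₁ h₀ h₂
  · exact f.hasAffineLengthOn_convexHull_triple_of_lt h₀ h₁ h₂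
  · exact f.hasAffineLengthOn_convexHull_triple_of_gt h₀ h₁ h₂
  · simpa only [hyxz] using f.hasAffineLengthOn_convexHull_triple_of_lt h₁ h₀ h₂
  · simpa only [hzxy] using f.hasAffineLengthOn_convexHull_triple_of_lt h₂ h₀ h₁
  · exact hasAffineLengthOn_of_eq_empty fun t ht =>
      f.preimage_singleton_inter_convexHull_eq_empty_of_gt <| by
        rintro _ (rfl | rfl | rfl)
        exacts [h₀ t ht, h₁ t ht, h₂ t ht]

end AffineLength

namespace Affine.Simplex

open Finset

section Face

variable {k V P : Type*} [Ring k] [LinearOrder k] [ZeroLEOneClass k] [AddCommGroup V]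
  [Module k V] [AddTorsor V P]

theorem closedInterior_face_inter_subset {n : ℕ} (s : Simplex k P n)
    {fs₁ fs₂ fs : Finset (Fin (n + 1))} {m₁ m₂ m : ℕ} (h₁ : #fs₁ = m₁ + 1) (h₂ : #fs₂ = m₂ + 1)
    (h : #fs = m + 1) (hfs : fs₁ ∩ fs₂ ⊆ fs) :
    (s.face h₁).closedInterior ∩ (s.face h₂).closedInterior ⊆ (s.face h).closedInterior := by
  rintro p ⟨hp₁, hp₂⟩
  obtain ⟨w, hw, rfl⟩ := eq_affineCombination_of_mem_affineSpan_of_fintype <|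
    s.affineSpan_face_le h₁ (closedInterior_subset_affineSpan hp₁)
  rw [affineCombination_mem_closedInterior_face_iff_mem_Icc _ _ hw] at hp₁ hp₂ ⊢
  refine ⟨fun i _ => ?_, fun i hi => ?_⟩
  · by_cases hi₁ : i ∈ fs₁
    · exact hp₁.1 i hi₁
    · rw [hp₁.2 i hi₁]
      exact ⟨le_rfl, zero_le_one⟩
  · by_cases hi₁ : i ∈ fs₁
    · exact hp₂.2 i fun hi₂ => hi (hfs (mem_inter.2 ⟨hi₁, hi₂⟩))
    · exact hp₁.2 i hi₁

end Face

section Frontier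

variable {V : Type*} [NormedAddCommGroup V] [NormedSpace ℝ V]

theorem interior_closedInterior {n : ℕ} [NeZero n] (s : Simplex ℝ V n)
    (hs : affineSpan ℝ (range s.points) = ⊤) : interior s.closedInterior = s.interior := by
  let b : AffineBasis (Fin (n + 1)) ℝ V := ⟨s.points, s.independent, hs⟩
  rw [← convexHull_eq_closedInterior, show s.points = b from rfl, b.interior_convexHull]
  ext p
  have hsum := b.sum_coord_apply_eq_one p
  conv_rhs => rw [← b.affineCombination_coord_eq_self p]
  rw [mem_ofPred_eq, show ⇑b = s.points from rfl, affineCombination_mem_interior_iff hsum]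
  refine ⟨fun hpos i => ⟨hpos i, ?_⟩, fun h i => (h i).1⟩
  obtain ⟨j, hji⟩ : ∃ j, j ≠ i := ⟨i.succAbove ⟨0, NeZero.pos n⟩, Fin.succAbove_ne _ _⟩
  rw [← hsum]
  exact Finset.single_lt_sum hji (Finset.mem_univ _) (Finset.mem_univ _) (hpos j)
    fun k _ _ => (hpos k).le

theorem frontier_closedInterior {n : ℕ} [NeZero n] (s : Simplex ℝ V n)
    (hs : affineSpan ℝ (range s.points) = ⊤) :
    frontier s.closedInterior = ⋃ i, (s.faceOpposite i).closedInterior := by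
  rw [frontier, s.isClosed_closedInterior.closure_eq, s.interior_closedInterior hs,
    closedInterior_sdiff_interior]

end Frontier

end Affine.Simplex

section Tetrahedron

open Finset

variable {E : Type*} [NormedAddCommGroup E] [NormedSpace ℝ E] [FiniteDimensional ℝ E]
  [MeasurableSpace E] [BorelSpace E]

theorem Affine.Simplex.hasAffineLengthOn_frontier (s : Affine.Simplex ℝ E 3)
    (hs : affineSpan ℝ (range s.points) = ⊤) (f : E →ₗ[ℝ] ℝ) {s₀ s₁ : ℝ} {I : Set ℝ}
    (hI : IsPreconnected I) (hv : ∀ t ∈ I, ∀ i, f (s.points i) ≠ (1 - t) * s₀ + t * s₁) :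
    HasAffineLengthOn (fun t => f ⁻¹' {(1 - t) * s₀ + t * s₁} ∩ frontier s.closedInterior) I := by
  simp_rw [s.frontier_closedInterior hs, inter_iUnion]
  refine HasAffineLengthOn.iUnion
    (fun i => (s.faceOpposite i).hasAffineLengthOn_closedInterior f hI fun t ht j => hv t ht _)
    (fun i t _ => ((isClosed_singleton.preimage f.continuous_of_finiteDimensional).inter
      (s.faceOpposite i).isClosed_closedInterior).measurableSet) fun t ht i j hij => ?_
  have hedge : #({i}ᶜ ∩ {j}ᶜ : Finset (Fin 4)) = 1 + 1 := by
    rw [← Finset.compl_union, card_compl, ← Finset.insert_eq, card_pair hij]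
    rfl
  dsimp only
  have hvertex : f ((s.face hedge).points 0) ≠ (1 - t) * s₀ + t * s₁ := hv t ht _
  refine (f.subsingleton_preimage_singleton_inter_affineSegment (y := (s.face hedge).points 1)
    hvertex).anti ?_
  rintro w ⟨⟨hw, hwi⟩, -, hwj⟩
  refine ⟨hw, ?_⟩
  rw [← closedInterior_eq_affineSegment]
  exact s.closedInterior_face_inter_subset _ _ hedge subset_rfl ⟨hwi, hwj⟩

end Tetrahedron

theorem cross_section_perimeter_affine_general
    (ℓ : ℝ) (hℓ : 0 < ℓ) (p : Fin 4 → EuclideanSpace ℝ (Fin 3))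
    (hdist : ∀ i j, i ≠ j → dist (p i) (p j) = ℓ)
    (n : EuclideanSpace ℝ (Fin 3)) (s₀ s₁ : ℝ)
    (P : ℝ → Set (EuclideanSpace ℝ (Fin 3)))
    (hP : ∀ t, P t = {x | ⟪x, n⟫ = (1 - t) * s₀ + t * s₁})
    (a b : ℝ)
    (hvert : ∀ t ∈ Set.Ioo a b, ∀ i, p i ∉ P t) :
    ∃ c₀ c₁ : ℝ, ∀ t ∈ Set.Ioo a b,
      μH[1] (P t ∩ frontier (convexHull ℝ (Set.range p))) =
        ENNReal.ofReal (c₀ + c₁ * t) := by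
  let s : Affine.Simplex ℝ (EuclideanSpace ℝ (Fin 3)) 3 :=
    ⟨p, affineIndependent_of_dist_eq hℓ.ne' hdist⟩
  have hspan : affineSpan ℝ (range s.points) = ⊤ :=
    s.independent.affineSpan_eq_top_iff_card_eq_finrank_add_one.2 (by simp)
  have hP' (t : ℝ) : P t = innerₗ _ n ⁻¹' {(1 - t) * s₀ + t * s₁} := by
    ext x
    simp [hP, real_inner_comm]
  obtain ⟨c₀, c₁, h⟩ := s.hasAffineLengthOn_frontier hspan (innerₗ _ n) isPreconnected_Ioo
    fun t ht i hi => hvert t ht i (by rw [hP']; exact hi)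
  refine ⟨c₀, c₁, fun t ht => ?_⟩
  rw [hP', show p = s.points from rfl, Affine.Simplex.convexHull_eq_closedInterior]
  exact (h t ht).2

/-- Let `Q ⊂ ℝ³` be a solid regular tetrahedron of side length `ℓ > 0`
and, for a unit vector `n` and reals `s₀ < s₁`, let `Π_t = {x : ⟪x,n⟫ = (1−t)s₀ + t s₁}` be
a plane moving linearly in `t`. On any open interval of parameters `t` for which `Π_t`
contains no vertex of `Q` and meets `Q`, the perimeter `t ↦ length(Π_t ∩ ∂Q)` of the
cross-section is an affine function of `t`. -/
theorem cross_section_perimeter_affine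
    (ℓ : ℝ) (hℓ : 0 < ℓ) (p : Fin 4 → EuclideanSpace ℝ (Fin 3))
    (hdist : ∀ i j, i ≠ j → dist (p i) (p j) = ℓ)
    (n : EuclideanSpace ℝ (Fin 3)) (hn : ‖n‖ = 1) (s₀ s₁ : ℝ) (hs : s₀ < s₁)
    (P : ℝ → Set (EuclideanSpace ℝ (Fin 3)))
    (hP : ∀ t, P t = {x | ⟪x, n⟫ = (1 - t) * s₀ + t * s₁})
    (a b : ℝ) (hab : a < b)
    (hvert : ∀ t ∈ Set.Ioo a b, ∀ i, p i ∉ P t)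
    (hmeet : ∀ t ∈ Set.Ioo a b, (P t ∩ convexHull ℝ (Set.range p)).Nonempty) :
    ∃ c₀ c₁ : ℝ, ∀ t ∈ Set.Ioo a b,
      μH[1] (P t ∩ frontier (convexHull ℝ (Set.range p))) =
        ENNReal.ofReal (c₀ + c₁ * t) :=
  cross_section_perimeter_affine_general ℓ hℓ p hdist n s₀ s₁ P hP a b hvert
end
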